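/- If E is a phase observable that commutes with the number observable (P_n E(X) = E(X) P_n for all n and Borel X ⊆ [0,2π)), then E(X) = (ℓ(X)/(2π))·I for all X. Consequently, the number observable and any nontrivial phase observable are noncoexistent. -/

import Mathlib

open MeasureTheory Complex

/-- `phaseInt X n m = (1/2π) ∫_X e^{i(n-m)x} dx`. -/
noncomputable def phaseInt (X : Set ℝ) (n m : ℕ) : ℂ :=
  ((1 / (2 * Real.pi) : ℝ) : ℂ) *
    ∫ x in X, Complex.exp (Complex.I * ((n : ℂ) - (m : ℂ)) * (x : ℂ))

/-!
Commuting with the number observable means that `E(X)` commutes with every spectral projection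
`Pₙ = ⟨eₙ, ·⟩ eₙ`, so `E(X)` is diagonal in the number basis: `⟨eₙ, E(X) φ⟩ = ⟨eₙ, E(X) eₙ⟩ ⟨eₙ, φ⟩`.
The diagonal entries of a phase observable are `cₙₙ ⋅ ℓ(X)/2π = ℓ(X)/2π`, since the `ξₙ` are unit
vectors, so `E(X)` is the scalar `ℓ(X)/2π`.
-/

theorem phaseInt_self (X : Set ℝ) (n : ℕ) :
    phaseInt X n n = (((volume X).toReal / (2 * Real.pi) : ℝ) : ℂ) := by
  simp only [phaseInt, sub_self, mul_zero, zero_mul, Complex.exp_zero, integral_const,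
    real_smul, measureReal_def, Measure.restrict_apply_univ]
  push_cast
  ring

section InnerProductSpace

variable {𝕜 E : Type*} [RCLike 𝕜] [NormedAddCommGroup E] [InnerProductSpace 𝕜 E]

theorem HilbertBasis.ext_inner_left {ι : Type*} (b : HilbertBasis ι 𝕜 E) {v w : E}
    (h : ∀ i, inner 𝕜 (b i) v = inner 𝕜 (b i) w) : v = w := by
  refine b.repr.injective (lp.ext (funext fun i => ?_))
  rw [b.repr_apply_apply, b.repr_apply_apply, h]

theorem inner_map_eq_of_commute_projection {F : Type*} [FunLike F E E] [LinearMapClass F 𝕜 E E]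
    {v : E} (hv : ‖v‖ = 1) (T : F) (φ : E)
    (hT : inner 𝕜 v (T φ) • v = T (inner 𝕜 v φ • v)) :
    inner 𝕜 v (T φ) = inner 𝕜 v φ * inner 𝕜 v (T v) := by
  have h := congrArg (inner 𝕜 v) hT
  rw [inner_smul_right, inner_self_eq_norm_sq_to_K, hv, map_smul, inner_smul_right] at h
  simpa using h

theorem HilbertBasis.eq_smul_one_of_commute_projection {ι : Type*} (b : HilbertBasis ι 𝕜 E)
    (T : E →L[𝕜] E) (a : 𝕜)
    (hT : ∀ i φ, inner 𝕜 (b i) (T φ) • b i = T (inner 𝕜 (b i) φ • b i))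
    (hdiag : ∀ i, inner 𝕜 (b i) (T (b i)) = a) :
    T = a • 1 := by
  ext φ
  refine b.ext_inner_left fun i => ?_
  rw [inner_map_eq_of_commute_projection (b.orthonormal.1 i) T φ (hT i φ)]
  simp [hdiag, inner_smul_right, mul_comm]

end InnerProductSpace

theorem stmt14 {H : Type*} [NormedAddCommGroup H] [InnerProductSpace ℂ H] [CompleteSpace H]
    (e : HilbertBasis ℕ ℂ H) (ξ : ℕ → H) (hξ : ∀ n, ‖ξ n‖ = 1)
    (c : ℕ → ℕ → ℂ) (hc : ∀ n m, c n m = (inner ℂ (ξ n) (ξ m) : ℂ))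
    (E : Set ℝ → (H →L[ℂ] H))
    (hE : ∀ X : Set ℝ, MeasurableSet X → X ⊆ Set.Ico 0 (2 * Real.pi) → ∀ n m : ℕ,
      (inner ℂ (e n) (E X (e m)) : ℂ) = c n m * phaseInt X n m)
    (hcomm : ∀ (n : ℕ) (X : Set ℝ), MeasurableSet X → X ⊆ Set.Ico 0 (2 * Real.pi) →
      ∀ φ : H,
      (inner ℂ (e n) (E X φ) : ℂ) • (e n : H) = E X ((inner ℂ (e n) φ : ℂ) • (e n : H))) :
    ∀ X : Set ℝ, MeasurableSet X → X ⊆ Set.Ico 0 (2 * Real.pi) →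
      E X = (((volume X).toReal / (2 * Real.pi) : ℝ) : ℂ) • (1 : H →L[ℂ] H) := by
  intro X hX hXsub
  refine e.eq_smul_one_of_commute_projection (E X) _ (hcomm · X hX hXsub) fun n => ?_
  rw [hE X hX hXsub n n, hc, inner_self_eq_norm_sq_to_K, hξ, phaseInt_self]
  norm_num
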